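/- Let f, g : 𝕋^d → ℝ be smooth with ∫_{𝕋^d} g dx = 0, and let λ ∈ ℕ, λ ≥ 1. Then |⨍_{𝕋^d} f(x) g(λx) dx| ≤ √d ‖f‖_{C^1} ‖g‖_{L^1(𝕋^d)} / λ. -/

import Mathlib

open MeasureTheory Set
open scoped ENNReal NNReal Pointwise

noncomputable section

/-- We model the flat torus `𝕋^d = ℝ^d/ℤ^d` by working with `ℤ^d`-periodic functions on
`ℝ^d` (with the Euclidean norm); integrals and norms are taken over the fundamental
domain `[0,1]^d`. -/
abbrev Ed (d : ℕ) : Type := EuclideanSpace ℝ (Fin d)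

/-- The fundamental domain `[0,1]^d` of the torus. -/
def cube (d : ℕ) : Set (Ed d) := {x | ∀ i, x i ∈ Icc (0:ℝ) 1}

/-- An integer vector, viewed as an element of `ℝ^d`. -/
def intVec {d : ℕ} (k : Fin d → ℤ) : Ed d := WithLp.toLp 2 (fun i => (k i : ℝ))

/-- `ℤ^d`-periodicity: `f` descends to a function on the torus `𝕋^d`. -/
def ZPeriodic {d : ℕ} {F : Type*} (f : Ed d → F) : Prop :=
  ∀ (x : Ed d) (k : Fin d → ℤ), f (x + intVec k) = f x

/-- A map `ℝ^d → ℝ^d` descending to a map of the torus: `Φ(x + k) = Φ(x) + k`. -/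
def ZPeriodicMap {d : ℕ} (Φ : Ed d → Ed d) : Prop :=
  ∀ (x : Ed d) (k : Fin d → ℤ), Φ (x + intVec k) = Φ x + intVec k

/-- The (pointwise) divergence of a vector field on `ℝ^d`. -/
def divg {d : ℕ} (u : Ed d → Ed d) (x : Ed d) : ℝ :=
  ∑ i, fderiv ℝ u x (EuclideanSpace.single i 1) i

/-- The `L^p` norm on the torus: the `L^p` norm over the fundamental domain `[0,1]^d`. -/
def LpN {d : ℕ} {F : Type*} [NormedAddCommGroup F] (p : ℝ≥0∞) (f : Ed d → F) : ℝ :=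
  (eLpNorm f p (volume.restrict (cube d))).toReal

/-- The `C^k` norm on the torus: sup over `[0,1]^d` of all derivatives of order `≤ k`. -/
def CkN {d : ℕ} {F : Type*} [NormedAddCommGroup F] [NormedSpace ℝ F] (k : ℕ)
    (f : Ed d → F) : ℝ :=
  ⨆ (j : Fin (k+1)) (x : cube d), ‖iteratedFDeriv ℝ (j : ℕ) f (x : Ed d)‖

/-- The `W^{k,p}` norm on the torus: sum of the `L^p` norms of all derivatives of
order `≤ k`. -/
def WkpN {d : ℕ} {F : Type*} [NormedAddCommGroup F] [NormedSpace ℝ F] (k : ℕ) (p : ℝ≥0∞)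
    (f : Ed d → F) : ℝ :=
  ∑ j ∈ Finset.range (k+1), LpN p (iteratedFDeriv ℝ j f)

/-- A smooth diffeomorphism of the torus `𝕋^d`. -/
structure IsTorusDiffeo {d : ℕ} (Φ : Ed d → Ed d) : Prop where
  smooth : ContDiff ℝ (⊤ : ℕ∞) Φ
  bij : Function.Bijective Φ
  inv_smooth : ContDiff ℝ (⊤ : ℕ∞) (Function.invFun Φ)
  periodic : ZPeriodicMap Φ

/-- `Φ` is measure preserving: `|det DΦ(x)| = 1` for every `x`. -/
def IsMeasurePres {d : ℕ} (Φ : Ed d → Ed d) : Prop :=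
  ∀ x : Ed d, |LinearMap.det ((fderiv ℝ Φ x) : Ed d →ₗ[ℝ] Ed d)| = 1

section Aux
variable {d : ℕ}

lemma ed_apply_add (x y : Ed d) (i : Fin d) : (x + y) i = x i + y i := rfl
lemma ed_apply_smul (c : ℝ) (x : Ed d) (i : Fin d) : (c • x) i = c * x i := rfl

lemma ed_continuous_eval (i : Fin d) : Continuous fun x : Ed d => x i :=
  (continuous_apply i).comp (EuclideanSpace.equiv (Fin d) ℝ).continuous

lemma ed_norm_le {c : ℝ} (hc : 0 ≤ c) {y : Ed d} (h : ∀ i, |y i| ≤ c) :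
    ‖y‖ ≤ Real.sqrt d * c := by
  rw [EuclideanSpace.norm_eq]
  have h1 : ∑ i, ‖y i‖ ^ 2 ≤ ∑ _i : Fin d, c ^ 2 := by
    apply Finset.sum_le_sum
    intro i _
    have := h i
    rw [Real.norm_eq_abs]
    nlinarith [abs_nonneg (y i)]
  calc Real.sqrt (∑ i, ‖y i‖ ^ 2) ≤ Real.sqrt (d * c ^ 2) := by
        apply Real.sqrt_le_sqrt; simpa using h1
    _ = Real.sqrt d * c := by
        rw [Real.sqrt_mul (by positivity), Real.sqrt_sq hc]

lemma box_isCompact (b : ℝ) (hb : 0 ≤ b) :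
    IsCompact {y : Ed d | ∀ i, y i ∈ Icc (0:ℝ) b} := by
  apply Metric.isCompact_of_isClosed_isBounded
  · have : {y : Ed d | ∀ i, y i ∈ Icc (0:ℝ) b} = ⋂ i, (fun y : Ed d => y i) ⁻¹' Icc (0:ℝ) b := by
      ext y; simp [Set.mem_iInter]
    rw [this]
    exact isClosed_iInter fun i => isClosed_Icc.preimage (ed_continuous_eval i)
  · rw [Metric.isBounded_iff_subset_closedBall 0]
    refine ⟨Real.sqrt d * b, fun y hy => ?_⟩
    rw [Metric.mem_closedBall, dist_zero_right]
    exact ed_norm_le hb fun i => abs_le.2 ⟨by linarith [(hy i).1], (hy i).2⟩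

lemma cube_isCompact : IsCompact (cube d) := box_isCompact 1 zero_le_one

lemma cube_convex : Convex ℝ (cube d) := by
  have : cube d = ⋂ i, (fun y : Ed d => y i) ⁻¹' Icc (0:ℝ) 1 := by
    ext y; simp [cube, Set.mem_iInter]
  rw [this]
  refine convex_iInter fun i => ?_
  exact (convex_Icc 0 1).is_linear_preimage ⟨fun x y => rfl, fun c x => rfl⟩

lemma hyperplane_null (i : Fin d) (c : ℝ) : volume {x : Ed d | x i = c} = 0 := by
  have h := (EuclideanSpace.volume_preserving_symm_measurableEquiv_toLp (Fin d)).measure_preimage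
    (s := {y : Fin d → ℝ | y i = c})
    ((measurableSet_eq_fun (measurable_pi_apply i) measurable_const)).nullMeasurableSet
  have e : {x : Ed d | x i = c} = (MeasurableEquiv.toLp 2 (Fin d → ℝ)).symm ⁻¹' {y | y i = c} := rfl
  rw [e, h, volume_pi, Measure.pi_hyperplane]

lemma cube_volume : volume (cube d) = 1 := by
  have h := (EuclideanSpace.volume_preserving_symm_measurableEquiv_toLp (Fin d)).measure_preimage
    (s := univ.pi fun _ : Fin d => Icc (0:ℝ) 1)
    (MeasurableSet.univ_pi fun _ => measurableSet_Icc).nullMeasurableSet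
  have e : cube d = (MeasurableEquiv.toLp 2 (Fin d → ℝ)).symm ⁻¹' (univ.pi fun _ => Icc 0 1) := by
    ext x; simp only [cube, mem_preimage, Set.mem_univ_pi, mem_setOf_eq]; rfl
  rw [e, h, volume_pi_pi]
  simp

lemma box_ae_ico (b : ℝ) :
    {y : Ed d | ∀ i, y i ∈ Icc (0:ℝ) b} =ᵐ[volume] {y : Ed d | ∀ i, y i ∈ Ico (0:ℝ) b} := by
  rw [MeasureTheory.ae_eq_set]
  constructor
  · refine measure_mono_null (t := ⋃ i, {y : Ed d | y i = b}) ?_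
      (measure_iUnion_null fun i => hyperplane_null i b)
    intro y hy
    obtain ⟨h1, h2⟩ := hy
    simp only [mem_setOf_eq, not_forall] at h2
    obtain ⟨i, hi⟩ := h2
    rw [Set.mem_Ico, not_and_or, not_lt] at hi
    refine Set.mem_iUnion.2 ⟨i, ?_⟩
    have := h1 i
    rcases hi with h | h
    · exact absurd this.1 (by simpa using h)
    · exact le_antisymm this.2 h
  · refine measure_mono_null (t := (∅ : Set (Ed d))) ?_ (by simp)
    intro y hy
    exact absurd (fun i => ⟨(hy.1 i).1, le_of_lt (hy.1 i).2⟩) hy.2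

def Bk {d : ℕ} {lam : ℕ} (k : Fin d → Fin lam) : Set (Ed d) :=
  {y | ∀ i, y i ∈ Ico ((k i : ℕ) : ℝ) ((k i : ℕ) + 1)}

lemma Bk_measurable {lam : ℕ} (k : Fin d → Fin lam) : MeasurableSet (Bk k) := by
  have : Bk k = ⋂ i, (fun y : Ed d => y i) ⁻¹' Ico ((k i : ℕ) : ℝ) ((k i : ℕ) + 1) := by
    ext y; simp [Bk, Set.mem_iInter]
  rw [this]
  exact MeasurableSet.iInter fun i => measurableSet_Ico.preimage (ed_continuous_eval i).measurable

lemma union_Bk (lam : ℕ) :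
    ⋃ k : Fin d → Fin lam, Bk k = {y : Ed d | ∀ i, y i ∈ Ico (0:ℝ) lam} := by
  ext y
  simp only [Set.mem_iUnion, Bk, mem_setOf_eq]
  constructor
  · rintro ⟨k, hk⟩ i
    have hk1 : (k i : ℕ) < lam := (k i).isLt
    constructor
    · have : (0:ℝ) ≤ (k i : ℕ) := Nat.cast_nonneg _
      linarith [(hk i).1]
    · calc y i < (k i : ℕ) + 1 := (hk i).2
        _ ≤ lam := by have h' : (k i : ℕ) + 1 ≤ lam := Nat.succ_le_of_lt hk1; push_cast; exact_mod_cast h'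
  · intro h
    refine ⟨fun i => ⟨⌊y i⌋₊, ?_⟩, fun i => ⟨?_, ?_⟩⟩
    · exact (Nat.floor_lt (h i).1).2 (h i).2
    · exact Nat.floor_le (h i).1
    · exact Nat.lt_floor_add_one _

lemma disjoint_Bk (lam : ℕ) : Pairwise (Function.onFun Disjoint (Bk (d := d) (lam := lam))) := by
  intro k k' hkk'
  rw [Function.onFun, Set.disjoint_left]
  rintro y hy hy'
  apply hkk'
  funext i
  have h1 := hy i
  have h2 := hy' i
  have hy0 : (0:ℝ) ≤ y i := le_trans (Nat.cast_nonneg _) h1.1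
  have e1 : ⌊y i⌋₊ = (k i : ℕ) := (Nat.floor_eq_iff hy0).2 ⟨h1.1, h1.2⟩
  have e2 : ⌊y i⌋₊ = (k' i : ℕ) := (Nat.floor_eq_iff hy0).2 ⟨h2.1, h2.2⟩
  exact Fin.ext (e1 ▸ e2)

lemma Bk_image {lam : ℕ} (k : Fin d → Fin lam) :
    (fun y : Ed d => y + intVec fun i => ((k i : ℕ) : ℤ)) '' {y : Ed d | ∀ i, y i ∈ Ico (0:ℝ) 1}
      = Bk k := by
  ext z
  simp only [Set.mem_image, mem_setOf_eq, Bk]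
  constructor
  · rintro ⟨y, hy, rfl⟩ i
    have := hy i
    have e : (y + intVec fun i => ((k i : ℕ) : ℤ)) i = y i + (k i : ℕ) := by
      rw [ed_apply_add]; simp [intVec]
    rw [e]
    constructor <;> [linarith [this.1]; linarith [this.2]]
  · intro hz
    refine ⟨z - intVec fun i => ((k i : ℕ) : ℤ), fun i => ?_, by abel⟩
    have e : (z - intVec fun i => ((k i : ℕ) : ℤ)) i = z i - (k i : ℕ) := by
      show z i - ((k i : ℕ) : ℝ) = _; simp [intVec]
    rw [e]
    have := hz i
    constructor <;> [linarith [this.1]; linarith [this.2]]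

end Aux

/-- Lemma 3.7, inequality (3.9): for smooth `f, g` on `𝕋^d` with `g` of zero mean and
`λ ∈ ℕ*`, `|⨍ f g_λ| ≤ √d ‖f‖_{C¹} ‖g‖_{L¹} / λ`, where `g_λ(x) = g(λx)`. -/
theorem mean_value_fast_oscillation (d : ℕ) (f g : Ed d → ℝ)
    (hf : ContDiff ℝ (⊤ : ℕ∞) f) (hg : ContDiff ℝ (⊤ : ℕ∞) g)
    (hfp : ZPeriodic f) (hgp : ZPeriodic g)
    (hmean : ∫ x in cube d, g x = 0) (lam : ℕ) (hlam : 1 ≤ lam) :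
    |⨍ x in cube d, f x * g ((lam : ℝ) • x)|
      ≤ Real.sqrt d * CkN 1 f * LpN 1 g / (lam : ℝ) := by
  classical
  have hR0 : (0:ℝ) < (lam:ℝ) := by exact_mod_cast hlam
  have hRne : (lam:ℝ) ≠ 0 := ne_of_gt hR0
  set R : ℝ := (lam : ℝ) with hRdef
  set Q0 : Set (Ed d) := {y : Ed d | ∀ i, y i ∈ Ico (0:ℝ) 1} with hQ0def
  have hcubeQ0 : cube d =ᵐ[volume] Q0 := box_ae_ico 1
  have hQ0cube : Q0 ⊆ cube d := fun y hy i => ⟨(hy i).1, (hy i).2.le⟩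
  have hQ0meas : MeasurableSet Q0 := by
    have : Q0 = ⋂ i, (fun y : Ed d => y i) ⁻¹' Ico (0:ℝ) 1 := by
      ext y; simp [hQ0def, Set.mem_iInter]
    rw [this]
    exact MeasurableSet.iInter fun i => measurableSet_Ico.preimage (ed_continuous_eval i).measurable
  set CL : Set (Ed d) := {y : Ed d | ∀ i, y i ∈ Icc (0:ℝ) R} with hCLdef
  set F : Ed d → ℝ := fun y => f (R⁻¹ • y) * g y with hFdef
  have hFc : Continuous F := (hf.continuous.comp (continuous_const_smul _)).mul hg.continuous
  have hIntCL : IntegrableOn F CL :=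
    hFc.continuousOn.integrableOn_compact (box_isCompact R hR0.le)
  have hmean0 : ∫ y in Q0, g y = 0 := by
    rw [← setIntegral_congr_set hcubeQ0]; exact hmean
  -- bound on the derivative
  have hM : ∀ x ∈ cube d, ‖fderiv ℝ f x‖ ≤ CkN 1 f := by
    intro x hx
    have e : ‖fderiv ℝ f x‖ = ‖iteratedFDeriv ℝ 1 f x‖ := by
      rw [← norm_iteratedFDeriv_fderiv (n := 0), norm_iteratedFDeriv_zero]
    rw [e]
    have hbdd : ∀ j : Fin 2, BddAbove (Set.range fun x : cube d =>
        ‖iteratedFDeriv ℝ (j:ℕ) f (x : Ed d)‖) := by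
      intro j
      have hc : Continuous fun x : Ed d => ‖iteratedFDeriv ℝ (j:ℕ) f x‖ :=
        (hf.continuous_iteratedFDeriv (by exact_mod_cast le_top)).norm
      have : Set.range (fun x : cube d => ‖iteratedFDeriv ℝ (j:ℕ) f (x : Ed d)‖)
          = (fun x : Ed d => ‖iteratedFDeriv ℝ (j:ℕ) f x‖) '' cube d := by
        rw [show (fun x : cube d => ‖iteratedFDeriv ℝ (j:ℕ) f (x : Ed d)‖)
            = (fun x : Ed d => ‖iteratedFDeriv ℝ (j:ℕ) f x‖) ∘ (Subtype.val) from rfl,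
          Set.range_comp, Subtype.range_coe]
      rw [this]
      exact (cube_isCompact.image hc).bddAbove
    have h1 : ‖iteratedFDeriv ℝ 1 f x‖
        ≤ ⨆ x : cube d, ‖iteratedFDeriv ℝ (((1 : Fin 2)):ℕ) f (x : Ed d)‖ := by
      have := le_ciSup (hbdd 1) (⟨x, hx⟩ : cube d)
      simpa using this
    refine le_trans h1 ?_
    exact le_ciSup (f := fun j : Fin 2 => ⨆ x : cube d, ‖iteratedFDeriv ℝ (j:ℕ) f (x : Ed d)‖)
      (Set.Finite.bddAbove (Set.finite_range _)) 1
  have h0cube : (0 : Ed d) ∈ cube d := fun i => ⟨le_refl 0, zero_le_one⟩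
  have hM0 : 0 ≤ CkN 1 f := le_trans (norm_nonneg _) (hM 0 h0cube)
  set G : ℝ := ∫ y in Q0, |g y| with hGdef
  set v : (Fin d → Fin lam) → Ed d := fun k => intVec fun i => ((k i : ℕ) : ℤ) with hvdef
  set I : (Fin d → Fin lam) → ℝ := fun k => ∫ y in Q0, f (R⁻¹ • (y + v k)) * g y with hIdef
  -- the change of variables and decomposition
  have big : ∫ x in cube d, f x * g (R • x) = (R ^ d)⁻¹ * ∑ k : Fin d → Fin lam, I k := by
    have c1 : ∫ x in cube d, f x * g (R • x) = ∫ x in cube d, F (R • x) := by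
      refine setIntegral_congr_fun ?_ fun x _ => ?_
      · exact cube_isCompact.isClosed.measurableSet
      · simp only [hFdef]
        rw [smul_smul, inv_mul_cancel₀ hRne, one_smul]
    rw [c1, Measure.setIntegral_comp_smul_of_pos volume F (cube d) hR0,
      finrank_euclideanSpace_fin]
    have c2 : R • cube d = CL := by
      ext y
      rw [mem_smul_set_iff_inv_smul_mem₀ hRne]
      constructor
      · intro h i
        have hmem := h i
        rw [ed_apply_smul, inv_mul_eq_div] at hmem
        constructor
        · have := (le_div_iff₀ hR0).1 hmem.1; linarith
        · exact (div_le_one hR0).1 hmem.2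
      · intro h i
        rw [ed_apply_smul, inv_mul_eq_div]
        exact ⟨div_nonneg (h i).1 hR0.le, (div_le_one hR0).2 (h i).2⟩
    rw [c2]
    have c3 : ∫ y in CL, F y = ∑ k : Fin d → Fin lam, ∫ y in Bk k, F y := by
      rw [setIntegral_congr_set (box_ae_ico R), ← union_Bk lam,
        integral_iUnion (fun k => Bk_measurable k) (disjoint_Bk lam) ?_, tsum_fintype]
      rw [union_Bk lam]
      exact hIntCL.mono_set fun y hy i => ⟨(hy i).1, (hy i).2.le⟩
    rw [c3]
    have c4 : ∀ k : Fin d → Fin lam, ∫ y in Bk k, F y = I k := by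
      intro k
      rw [← Bk_image k]
      have emb : MeasurableEmbedding (fun y : Ed d => y + v k) :=
        (MeasurableEquiv.addRight (v k)).measurableEmbedding
      rw [(measurePreserving_add_right volume (v k)).setIntegral_image_emb emb F _]
      refine setIntegral_congr_fun hQ0meas fun y _ => ?_
      simp only [hFdef]
      rw [show g (y + v k) = g y from hgp y _]
    simp only [c4]
    rw [smul_eq_mul]
  -- per-term bound
  have hIb : ∀ k : Fin d → Fin lam, |I k| ≤ CkN 1 f * (Real.sqrt d / R) * G := by
    intro k
    have hφ : Continuous fun y : Ed d => f (R⁻¹ • (y + v k)) :=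
      hf.continuous.comp (((continuous_id.add continuous_const)).const_smul R⁻¹)
    have hint1 : IntegrableOn (fun y => f (R⁻¹ • (y + v k)) * g y) Q0 :=
      ((hφ.mul hg.continuous).continuousOn.integrableOn_compact cube_isCompact).mono_set hQ0cube
    have hintg : IntegrableOn g Q0 :=
      (hg.continuous.continuousOn.integrableOn_compact cube_isCompact).mono_set hQ0cube
    have hintag : IntegrableOn (fun y => |g y|) Q0 := hintg.abs
    have hvc : R⁻¹ • v k ∈ cube d := by
      intro i
      have e : (R⁻¹ • v k) i = R⁻¹ * (k i : ℕ) := by rw [ed_apply_smul]; simp [hvdef, intVec]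
      rw [e]
      have hk1 : ((k i : ℕ) : ℝ) + 1 ≤ R := by
        rw [hRdef]; exact_mod_cast Nat.succ_le_of_lt (k i).isLt
      constructor
      · positivity
      · rw [inv_mul_le_iff₀ hR0]; push_cast; linarith
    have hmem : ∀ y ∈ Q0, R⁻¹ • (y + v k) ∈ cube d := by
      intro y hy i
      have e : (R⁻¹ • (y + v k)) i = R⁻¹ * (y i + (k i : ℕ)) := by
        rw [ed_apply_smul, ed_apply_add]; simp [hvdef, intVec]
      rw [e]
      have hk1 : ((k i : ℕ) : ℝ) + 1 ≤ R := by
        rw [hRdef]; exact_mod_cast Nat.succ_le_of_lt (k i).isLt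
      have hy1 := (hy i).1
      have hy2 := (hy i).2
      constructor
      · have : (0:ℝ) ≤ y i + (k i : ℕ) := by positivity
        positivity
      · rw [inv_mul_le_iff₀ hR0]; push_cast; linarith
    have key : ∀ y ∈ Q0, |f (R⁻¹ • (y + v k)) - f (R⁻¹ • v k)|
        ≤ CkN 1 f * (Real.sqrt d / R) := by
      intro y hy
      have hdiff : ∀ x ∈ cube d, DifferentiableAt ℝ f x := fun x _ =>
        (hf.differentiable (by simp)).differentiableAt
      have h1 : ‖f (R⁻¹ • (y + v k)) - f (R⁻¹ • v k)‖
          ≤ CkN 1 f * ‖R⁻¹ • (y + v k) - R⁻¹ • v k‖ :=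
        Convex.norm_image_sub_le_of_norm_fderiv_le hdiff hM cube_convex hvc (hmem y hy)
      rw [Real.norm_eq_abs] at h1
      have e : R⁻¹ • (y + v k) - R⁻¹ • v k = R⁻¹ • y := by
        rw [smul_add, add_sub_cancel_right]
      rw [e, norm_smul, Real.norm_eq_abs, abs_of_pos (inv_pos.2 hR0)] at h1
      have hny : ‖y‖ ≤ Real.sqrt d := by
        have := ed_norm_le zero_le_one (y := y) fun i =>
          abs_le.2 ⟨by linarith [(hy i).1], (hy i).2.le⟩
        simpa using this
      calc |f (R⁻¹ • (y + v k)) - f (R⁻¹ • v k)| ≤ CkN 1 f * (R⁻¹ * ‖y‖) := h1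
        _ ≤ CkN 1 f * (Real.sqrt d / R) := by
            rw [div_eq_inv_mul]
            apply mul_le_mul_of_nonneg_left _ hM0
            exact mul_le_mul_of_nonneg_left hny (inv_pos.2 hR0).le
    have heq : I k = ∫ y in Q0, (f (R⁻¹ • (y + v k)) - f (R⁻¹ • v k)) * g y := by
      have expand : (fun y => (f (R⁻¹ • (y + v k)) - f (R⁻¹ • v k)) * g y)
          = fun y => f (R⁻¹ • (y + v k)) * g y - f (R⁻¹ • v k) * g y := by
        funext y; ring
      rw [expand, integral_sub hint1 (hintg.const_mul _), integral_const_mul, hmean0]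
      simp [hIdef]
    rw [heq]
    have hint2 : IntegrableOn (fun y => (f (R⁻¹ • (y + v k)) - f (R⁻¹ • v k)) * g y) Q0 := by
      have e : (fun y : Ed d => (f (R⁻¹ • (y + v k)) - f (R⁻¹ • v k)) * g y)
          = fun y => f (R⁻¹ • (y + v k)) * g y - f (R⁻¹ • v k) * g y := by
        funext y; ring
      rw [e]
      exact hint1.sub (hintg.const_mul _)
    calc |∫ y in Q0, (f (R⁻¹ • (y + v k)) - f (R⁻¹ • v k)) * g y|
        ≤ ∫ y in Q0, |(f (R⁻¹ • (y + v k)) - f (R⁻¹ • v k)) * g y| := by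
          have := norm_integral_le_integral_norm (μ := volume.restrict Q0)
              (fun y => (f (R⁻¹ • (y + v k)) - f (R⁻¹ • v k)) * g y)
          simp only [Real.norm_eq_abs] at this
          exact this
      _ ≤ ∫ y in Q0, CkN 1 f * (Real.sqrt d / R) * |g y| := by
          refine setIntegral_mono_on hint2.abs (hintag.const_mul _) hQ0meas fun y hy => ?_
          rw [abs_mul]
          exact mul_le_mul_of_nonneg_right (key y hy) (abs_nonneg _)
      _ = CkN 1 f * (Real.sqrt d / R) * G := by rw [integral_const_mul, hGdef]
  -- L¹ norm identification
  have hLp : LpN 1 g = G := by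
    have h1 : LpN 1 g = ∫ x in cube d, ‖g x‖ := by
      rw [LpN, eLpNorm_one_eq_lintegral_enorm,
        ← integral_norm_eq_lintegral_enorm hg.continuous.aestronglyMeasurable]
    rw [h1, setIntegral_congr_set hcubeQ0]
    simp [hGdef, Real.norm_eq_abs]
  -- averages
  have havg : (⨍ x in cube d, f x * g (R • x)) = ∫ x in cube d, f x * g (R • x) := by
    rw [setAverage_eq, measureReal_def, cube_volume]
    simp
  rw [havg, big, hLp]
  have hcard : (Fintype.card (Fin d → Fin lam) : ℝ) = R ^ d := by
    rw [Fintype.card_fun, Fintype.card_fin, Fintype.card_fin, hRdef]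
    push_cast; ring
  calc |(R ^ d)⁻¹ * ∑ k : Fin d → Fin lam, I k|
      = (R ^ d)⁻¹ * |∑ k : Fin d → Fin lam, I k| := by
        rw [abs_mul, abs_of_pos (by positivity)]
    _ ≤ (R ^ d)⁻¹ * ∑ k : Fin d → Fin lam, |I k| := by
        apply mul_le_mul_of_nonneg_left (Finset.abs_sum_le_sum_abs _ _) (by positivity)
    _ ≤ (R ^ d)⁻¹ * ∑ _k : Fin d → Fin lam, CkN 1 f * (Real.sqrt d / R) * G := by
        apply mul_le_mul_of_nonneg_left (Finset.sum_le_sum fun k _ => hIb k) (by positivity)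
    _ = (R ^ d)⁻¹ * (R ^ d * (CkN 1 f * (Real.sqrt d / R) * G)) := by
        rw [Finset.sum_const, Finset.card_univ, nsmul_eq_mul, hcard]
    _ = Real.sqrt d * CkN 1 f * G / R := by
        rw [← mul_assoc, inv_mul_cancel₀ (pow_ne_zero d hRne), one_mul]
        ring
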